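/- Let A be a unital C*-algebra, and let γ, ε > 0. Then there exists δ > 0 such that for all positive contractions a, b ∈ A and every tracial state τ on A with ‖a − b‖_{2,τ} < δ, one has d_τ((a − ε)_+) < d_τ(b) + γ, where d_τ(x) = lim_{n→∞} τ(x^{1/n}). -/

import Mathlib

/-!
Approximate `g_ε t = min (t / ε) 1` uniformly on `[-1, 1]` by a polynomial `p`. Because `τ` is
tracial, `‖x y‖_{2,τ}` and `‖y x‖_{2,τ}` are both at most `‖x‖ ‖y‖_{2,τ}`, so telescoping gives
`‖a ^ k - b ^ k‖_{2,τ} ≤ k ‖a - b‖_{2,τ}` for contractions; hence `g_ε a` and `g_ε b` are close in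
`‖·‖_{2,τ}`, and so are their traces by Cauchy–Schwarz. It remains to compare with `d_τ`:
`((t - ε)₊) ^ r ≤ g_ε t` on `[0, 1]` gives `d_τ ((a - ε)₊) ≤ τ (g_ε a)`, and `g_ε t ≤ t ^ r + η`
on `[0, 1]` for small `r > 0` gives `τ (g_ε b) ≤ d_τ b`.
-/

noncomputable section

variable {A : Type*} [CStarAlgebra A] [PartialOrder A] [StarOrderedRing A]

/-- A tracial state on a unital C*-algebra. -/
def IsTracialState (τ : A →ₗ[ℂ] ℂ) : Prop :=
  τ 1 = 1 ∧ (∀ a : A, 0 ≤ (τ (star a * a)).re ∧ (τ (star a * a)).im = 0) ∧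
    ∀ a b : A, τ (a * b) = τ (b * a)

/-- The 2-seminorm `‖a‖_{2,τ} = τ(a*a)^{1/2}`. -/
def trNorm (τ : A →ₗ[ℂ] ℂ) (a : A) : ℝ := Real.sqrt ((τ (star a * a)).re)

/-- The dimension function `d_τ(x) = lim_{n→∞} τ(x^{1/n})`; since
`n ↦ τ(x^{1/n})` is nondecreasing for a positive contraction `x`, the limit is the
supremum. -/
def dTau (τ : A →ₗ[ℂ] ℂ) (x : A) : ℝ :=
  ⨆ n : ℕ, (τ (cfc (fun t : ℝ => t ^ (1 / (n + 1 : ℝ))) x)).re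

/-- The cut-down `(x − ε)₊ = f_ε(x)`, `f_ε(t) = max (t − ε) 0`. -/
def cutdown (ε : ℝ) (x : A) : A := cfc (fun t : ℝ => max (t - ε) 0) x

open Set Polynomial Filter Topology
open scoped ComplexOrder

omit [PartialOrder A] [StarOrderedRing A] in
lemma trNorm_nonneg (τ : A →ₗ[ℂ] ℂ) (x : A) : 0 ≤ trNorm τ x := Real.sqrt_nonneg _

omit [PartialOrder A] [StarOrderedRing A] in
lemma spectrum_subset_Icc_of_norm_le_one {a : A} (ha : ‖a‖ ≤ 1) :
    spectrum ℝ a ⊆ Icc (-1) 1 := by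
  nontriviality A
  exact fun t ht => abs_le.mp ((spectrum.norm_le_norm_of_mem ht).trans ha)

lemma spectrum_subset_Icc_zero_one {a : A} (ha : 0 ≤ a) (ha1 : ‖a‖ ≤ 1) :
    spectrum ℝ a ⊆ Icc 0 1 :=
  fun _ ht => ⟨spectrum_nonneg_of_nonneg ha ht, (spectrum_subset_Icc_of_norm_le_one ha1 ht).2⟩

omit [PartialOrder A] [StarOrderedRing A] in
lemma norm_cfc_sub_aeval_le {a : A} (ha : IsSelfAdjoint a) (ha1 : ‖a‖ ≤ 1) {g : ℝ → ℝ}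
    (hg : ContinuousOn g (Icc (-1) 1)) {p : ℝ[X]} {η : ℝ} (hη : 0 ≤ η)
    (hp : ∀ t ∈ Icc (-1) 1, |p.eval t - g t| ≤ η) : ‖cfc g a - aeval a p‖ ≤ η := by
  have hspec := spectrum_subset_Icc_of_norm_le_one ha1
  rw [← cfc_polynomial p a, ← cfc_sub g (fun t => p.eval t) a (hg.mono hspec)
    p.continuous.continuousOn]
  refine norm_cfc_le hη fun t ht => ?_
  rw [Real.norm_eq_abs, abs_sub_comm]
  exact hp t (hspec ht)

lemma exists_one_sub_lt_rpow_one_div {s η : ℝ} (hs : 0 < s) (hη : 0 < η) :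
    ∃ n : ℕ, 1 - η < s ^ (1 / (n + 1 : ℝ)) := by
  have h : Tendsto (fun n : ℕ => s ^ (1 / (n + 1 : ℝ))) atTop (𝓝 (s ^ (0 : ℝ))) :=
    (Real.continuousAt_const_rpow hs.ne').tendsto.comp tendsto_one_div_add_atTop_nhds_zero_nat
  rw [Real.rpow_zero] at h
  exact (h.eventually (lt_mem_nhds (by linarith))).exists

namespace IsTracialState

variable {τ : A →ₗ[ℂ] ℂ}

lemma map_nonneg (hτ : IsTracialState τ) {x : A} (hx : 0 ≤ x) : 0 ≤ τ x := by
  have hx' : x = star (CFC.sqrt x) * CFC.sqrt x := by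
    rw [(CFC.sqrt_nonneg x).isSelfAdjoint.star_eq, CFC.sqrt_mul_sqrt_self x hx]
  rw [hx', Complex.nonneg_iff]
  exact ⟨(hτ.2.1 _).1, (hτ.2.1 _).2.symm⟩

/-- `τ` as a positive linear functional, whose GNS space carries `trNorm τ` as its norm. -/
def toPositiveLinearMap (hτ : IsTracialState τ) : A →ₚ[ℂ] ℂ := .mk₀ τ fun _ => hτ.map_nonneg

lemma trNorm_eq_norm_toPreGNS (hτ : IsTracialState τ) (x : A) :
    trNorm τ x = ‖hτ.toPositiveLinearMap.toPreGNS x‖ := rfl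

lemma re_mono (hτ : IsTracialState τ) {x y : A} (h : x ≤ y) : (τ x).re ≤ (τ y).re :=
  (Complex.le_def.mp (hτ.toPositiveLinearMap.monotone' h)).1

omit [PartialOrder A] [StarOrderedRing A] in
lemma re_algebraMap (hτ : IsTracialState τ) (r : ℝ) : (τ (algebraMap ℝ A r)).re = r := by
  rw [Algebra.algebraMap_eq_smul_one, ← Complex.coe_smul, map_smul, hτ.1]
  simp

omit [PartialOrder A] [StarOrderedRing A] in
lemma nontrivial (hτ : IsTracialState τ) : Nontrivial A :=
  ⟨⟨1, 0, fun h => one_ne_zero (α := ℂ) (by simpa [h] using hτ.1.symm)⟩⟩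

omit [PartialOrder A] [StarOrderedRing A] in
lemma trNorm_one (hτ : IsTracialState τ) : trNorm τ 1 = 1 := by
  simp [trNorm, hτ.1]

lemma norm_le_trNorm (hτ : IsTracialState τ) (x : A) : ‖τ x‖ ≤ trNorm τ x := by
  have h := norm_inner_le_norm (𝕜 := ℂ) (hτ.toPositiveLinearMap.toPreGNS 1)
    (hτ.toPositiveLinearMap.toPreGNS x)
  rw [PositiveLinearMap.preGNS_inner_def, ← hτ.trNorm_eq_norm_toPreGNS,
    ← hτ.trNorm_eq_norm_toPreGNS, hτ.trNorm_one, one_mul] at h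
  change ‖τ (star 1 * x)‖ ≤ _ at h
  rwa [star_one, one_mul] at h

lemma trNorm_add_le (hτ : IsTracialState τ) (x y : A) :
    trNorm τ (x + y) ≤ trNorm τ x + trNorm τ y := by
  simp only [hτ.trNorm_eq_norm_toPreGNS, map_add]
  exact norm_add_le _ _

lemma trNorm_sub_le (hτ : IsTracialState τ) (x y : A) :
    trNorm τ (x - y) ≤ trNorm τ x + trNorm τ y := by
  simp only [hτ.trNorm_eq_norm_toPreGNS, map_sub]
  exact norm_sub_le _ _

lemma trNorm_sum_le (hτ : IsTracialState τ) {ι : Type*} (s : Finset ι) (x : ι → A) :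
    trNorm τ (∑ i ∈ s, x i) ≤ ∑ i ∈ s, trNorm τ (x i) := by
  simp only [hτ.trNorm_eq_norm_toPreGNS, map_sum]
  exact norm_sum_le _ _

lemma trNorm_real_smul (hτ : IsTracialState τ) (c : ℝ) (x : A) :
    trNorm τ (c • x) = |c| * trNorm τ x := by
  rw [hτ.trNorm_eq_norm_toPreGNS, hτ.trNorm_eq_norm_toPreGNS, ← Complex.coe_smul, map_smul,
    norm_smul, Complex.norm_real, Real.norm_eq_abs]

omit [PartialOrder A] [StarOrderedRing A] in
lemma trNorm_star (hτ : IsTracialState τ) (x : A) : trNorm τ (star x) = trNorm τ x := by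
  rw [trNorm, trNorm, star_star, hτ.2.2]

lemma trNorm_mul_le_left (hτ : IsTracialState τ) (x y : A) :
    trNorm τ (x * y) ≤ ‖x‖ * trNorm τ y := by
  let f := hτ.toPositiveLinearMap
  calc trNorm τ (x * y) = ‖f.leftMulMapPreGNS x (f.toPreGNS y)‖ := rfl
    _ ≤ ‖x‖ * ‖f.toPreGNS y‖ :=
      (f.leftMulMapPreGNS x).le_of_opNorm_le (LinearMap.mkContinuous_norm_le _ (norm_nonneg x) _) _
    _ = ‖x‖ * trNorm τ y := rfl

lemma trNorm_mul_le_right (hτ : IsTracialState τ) (x y : A) :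
    trNorm τ (y * x) ≤ ‖x‖ * trNorm τ y := by
  rw [← hτ.trNorm_star, star_mul, ← norm_star x, ← hτ.trNorm_star y]
  exact hτ.trNorm_mul_le_left _ _

lemma trNorm_le_norm (hτ : IsTracialState τ) (x : A) : trNorm τ x ≤ ‖x‖ := by
  simpa [hτ.trNorm_one] using hτ.trNorm_mul_le_left x 1

lemma trNorm_pow_sub_pow_le (hτ : IsTracialState τ) {a b : A} (ha : ‖a‖ ≤ 1) (hb : ‖b‖ ≤ 1)
    (k : ℕ) : trNorm τ (a ^ k - b ^ k) ≤ k * trNorm τ (a - b) := by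
  have := hτ.nontrivial
  induction k with
  | zero => simp [trNorm]
  | succ k ih =>
    have hsplit : a ^ (k + 1) - b ^ (k + 1) = a * (a ^ k - b ^ k) + (a - b) * b ^ k := by
      rw [pow_succ' a, pow_succ' b]
      noncomm_ring
    have hbk : ‖b ^ k‖ ≤ 1 := (norm_pow_le b k).trans (pow_le_one₀ (norm_nonneg b) hb)
    calc trNorm τ (a ^ (k + 1) - b ^ (k + 1))
        ≤ ‖a‖ * trNorm τ (a ^ k - b ^ k) + ‖b ^ k‖ * trNorm τ (a - b) := by
          rw [hsplit]
          exact (hτ.trNorm_add_le _ _).trans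
            (add_le_add (hτ.trNorm_mul_le_left _ _) (hτ.trNorm_mul_le_right _ _))
      _ ≤ 1 * (k * trNorm τ (a - b)) + 1 * trNorm τ (a - b) := by
          gcongr <;> exact trNorm_nonneg τ _
      _ = (k + 1 : ℕ) * trNorm τ (a - b) := by push_cast; ring

lemma trNorm_aeval_sub_aeval_le (hτ : IsTracialState τ) {a b : A} (ha : ‖a‖ ≤ 1) (hb : ‖b‖ ≤ 1)
    (p : ℝ[X]) :
    trNorm τ (aeval a p - aeval b p) ≤
      (∑ i ∈ Finset.range (p.natDegree + 1), |p.coeff i| * i) * trNorm τ (a - b) := by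
  rw [aeval_eq_sum_range, aeval_eq_sum_range, ← Finset.sum_sub_distrib, Finset.sum_mul]
  refine (hτ.trNorm_sum_le _ _).trans (Finset.sum_le_sum fun i _ => ?_)
  rw [← smul_sub, hτ.trNorm_real_smul, mul_assoc]
  exact mul_le_mul_of_nonneg_left (hτ.trNorm_pow_sub_pow_le ha hb i) (abs_nonneg _)

lemma re_cfc_rpow_le_dTau (hτ : IsTracialState τ) {b : A} (hb : 0 ≤ b) (hb1 : ‖b‖ ≤ 1)
    (n : ℕ) : (τ (cfc (fun t : ℝ => t ^ (1 / (n + 1 : ℝ))) b)).re ≤ dTau τ b := by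
  refine le_ciSup (f := fun m : ℕ => (τ (cfc (fun t : ℝ => t ^ (1 / (m + 1 : ℝ))) b)).re)
    ⟨1, ?_⟩ n
  rintro _ ⟨m, rfl⟩
  have hle : cfc (fun t : ℝ => t ^ (1 / (m + 1 : ℝ))) b ≤ 1 :=
    cfc_le_one _ b fun t ht => Real.rpow_le_one (spectrum_subset_Icc_zero_one hb hb1 ht).1
      (spectrum_subset_Icc_zero_one hb hb1 ht).2 (by positivity)
  simpa [hτ.1] using hτ.re_mono hle

lemma re_cfc_le_dTau (hτ : IsTracialState τ) {b : A} (hb : 0 ≤ b) (hb1 : ‖b‖ ≤ 1) {g : ℝ → ℝ}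
    (hg : ContinuousOn g (Icc 0 1)) (hg0 : g 0 = 0) (hg1 : ∀ t ∈ Icc (0 : ℝ) 1, g t ≤ 1) :
    (τ (cfc g b)).re ≤ dTau τ b := by
  refine le_of_forall_pos_le_add fun η hη => ?_
  obtain ⟨s, hs, hgs⟩ := Metric.continuousWithinAt_iff.mp (hg 0 ⟨le_rfl, zero_le_one⟩) η hη
  obtain ⟨n, hn⟩ := exists_one_sub_lt_rpow_one_div hs hη
  set r := 1 / (n + 1 : ℝ)
  have hr : 0 ≤ r := by positivity
  -- `g ≤ η` on `[0, s)` by continuity at `0`, and `g ≤ 1 < s ^ r + η ≤ t ^ r + η` on `[s, 1]`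
  have hpt : ∀ t ∈ Icc (0 : ℝ) 1, g t ≤ t ^ r + η := by
    intro t ht
    rcases lt_or_ge t s with hts | hts
    · have := hgs ht (by rwa [Real.dist_eq, sub_zero, abs_of_nonneg ht.1])
      rw [Real.dist_eq, hg0, sub_zero] at this
      linarith [le_abs_self (g t), Real.rpow_nonneg ht.1 r]
    · linarith [hg1 t ht, Real.rpow_le_rpow hs.le hts hr]
  have hspec := spectrum_subset_Icc_zero_one hb hb1
  have hle : cfc g b ≤ cfc (fun t : ℝ => t ^ r) b + algebraMap ℝ A η := by
    rw [← cfc_add_const η _ b (Real.continuous_rpow_const hr).continuousOn hb.isSelfAdjoint]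
    exact cfc_mono (fun t ht => hpt t (hspec ht)) (hg.mono hspec)
      ((Real.continuous_rpow_const hr).add continuous_const).continuousOn
  calc (τ (cfc g b)).re ≤ (τ (cfc (fun t : ℝ => t ^ r) b)).re + η := by
        simpa [hτ.re_algebraMap] using hτ.re_mono hle
    _ ≤ dTau τ b + η := by gcongr; exact hτ.re_cfc_rpow_le_dTau hb hb1 n

lemma dTau_cutdown_le (hτ : IsTracialState τ) {a : A} (ha : 0 ≤ a) (ha1 : ‖a‖ ≤ 1) {ε : ℝ}
    (hε : 0 < ε) :
    dTau τ (cutdown ε a) ≤ (τ (cfc (fun t : ℝ => min (t / ε) 1) a)).re := by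
  refine ciSup_le fun n => hτ.re_mono ?_
  set r := 1 / (n + 1 : ℝ)
  have hr : 0 < r := by positivity
  have hspec := spectrum_subset_Icc_zero_one ha ha1
  have hpt : ∀ t ∈ Icc (0 : ℝ) 1, max (t - ε) 0 ^ r ≤ min (t / ε) 1 := by
    rintro t ⟨ht0, ht1⟩
    rcases le_or_gt t ε with htε | htε
    · rw [max_eq_right (by linarith), Real.zero_rpow hr.ne']
      positivity
    · rw [max_eq_left (by linarith), min_eq_right ((one_le_div hε).mpr htε.le)]
      exact Real.rpow_le_one (by linarith) (by linarith) hr.le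
  rw [cutdown, ← cfc_comp' (fun t : ℝ => t ^ r) _ a (Real.continuous_rpow_const hr.le).continuousOn]
  exact cfc_mono (fun t ht => hpt t (hspec ht))
    ((Real.continuous_rpow_const hr.le).comp (by fun_prop)).continuousOn

end IsTracialState

lemma exists_trNorm_cfc_sub_cfc_lt {g : ℝ → ℝ} (hg : ContinuousOn g (Icc (-1) 1)) {η : ℝ}
    (hη : 0 < η) :
    ∃ δ > 0, ∀ τ : A →ₗ[ℂ] ℂ, IsTracialState τ → ∀ a b : A, IsSelfAdjoint a → IsSelfAdjoint b →
      ‖a‖ ≤ 1 → ‖b‖ ≤ 1 → trNorm τ (a - b) < δ → trNorm τ (cfc g a - cfc g b) < η := by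
  obtain ⟨p, hp⟩ := exists_polynomial_near_of_continuousOn (-1) 1 g hg (η / 3) (by positivity)
  set C := ∑ i ∈ Finset.range (p.natDegree + 1), |p.coeff i| * i
  have hC : 0 ≤ C := Finset.sum_nonneg fun i _ => by positivity
  refine ⟨η / 3 / (C + 1), by positivity, fun τ hτ a b ha hb ha1 hb1 hab => ?_⟩
  have hpa := norm_cfc_sub_aeval_le ha ha1 hg (by positivity) fun t ht => (hp t ht).le
  have hpb := norm_cfc_sub_aeval_le hb hb1 hg (by positivity) fun t ht => (hp t ht).le
  have hpab : trNorm τ (aeval a p - aeval b p) < η / 3 :=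
    calc trNorm τ (aeval a p - aeval b p) ≤ C * trNorm τ (a - b) :=
          hτ.trNorm_aeval_sub_aeval_le ha1 hb1 p
      _ ≤ (C + 1) * trNorm τ (a - b) := by
          gcongr
          · exact trNorm_nonneg τ _
          · linarith
      _ < η / 3 := (lt_div_iff₀' (by positivity)).mp hab
  calc trNorm τ (cfc g a - cfc g b)
      = trNorm τ ((cfc g a - aeval a p) + (aeval a p - aeval b p) - (cfc g b - aeval b p)) := by
        congr 1; abel
    _ ≤ trNorm τ (cfc g a - aeval a p) + trNorm τ (aeval a p - aeval b p)
          + trNorm τ (cfc g b - aeval b p) :=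
        (hτ.trNorm_sub_le _ _).trans (by gcongr; exact hτ.trNorm_add_le _ _)
    _ < η := by
        linarith [(hτ.trNorm_le_norm _).trans hpa, (hτ.trNorm_le_norm _).trans hpb]

/-- Lemma 4.1(2): for `γ, ε > 0` there is `δ > 0` such that for all
positive contractions `a, b` and every tracial state `τ` with `‖a − b‖_{2,τ} < δ`,
one has `d_τ((a − ε)₊) < d_τ(b) + γ`. -/
theorem dTau_cutdown_lt (γ ε : ℝ) (hγ : 0 < γ) (hε : 0 < ε) :
    ∃ δ > (0 : ℝ), ∀ a b : A, 0 ≤ a → 0 ≤ b → ‖a‖ ≤ 1 → ‖b‖ ≤ 1 →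
      ∀ τ : A →ₗ[ℂ] ℂ, IsTracialState τ → trNorm τ (a - b) < δ →
        dTau τ (cutdown ε a) < dTau τ b + γ := by
  set g : ℝ → ℝ := fun t => min (t / ε) 1
  have hg : Continuous g := by fun_prop
  obtain ⟨δ, hδ, hcont⟩ := exists_trNorm_cfc_sub_cfc_lt (A := A) hg.continuousOn hγ
  refine ⟨δ, hδ, fun a b ha hb ha1 hb1 τ hτ hab => ?_⟩
  have hgb : (τ (cfc g b)).re ≤ dTau τ b :=
    hτ.re_cfc_le_dTau hb hb1 hg.continuousOn (by simp [g]) fun t _ => min_le_right _ _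
  have hgab : (τ (cfc g a - cfc g b)).re < γ :=
    (Complex.re_le_norm _).trans_lt <| (hτ.norm_le_trNorm _).trans_lt <|
      hcont τ hτ a b ha.isSelfAdjoint hb.isSelfAdjoint ha1 hb1 hab
  rw [map_sub, Complex.sub_re] at hgab
  linarith [hτ.dTau_cutdown_le ha ha1 hε]
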